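/- For all natural numbers n and m with m < n, and all real numbers a and b, the sum over k from 0 to n of (-1)^(n-k) * C(n,k) * (a + k*b)^m equals 0. -/

import Mathlib

open Finset Polynomial

theorem Polynomial.sum_range_alternating_choose_mul_eval_eq_zero {R : Type*} [CommRing R]
    {P : R[X]} {n : ℕ} (hP : P.natDegree < n) :
    ∑ k ∈ range (n + 1), (-1 : R) ^ (n - k) * n.choose k * P.eval (k : R) = 0 := by
  have h := congr_fun (fwdDiff_iter_eq_zero_of_degree_lt hP) 0
  rw [fwdDiff_iter_eq_sum_shift, Pi.zero_apply] at h
  rw [← h]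
  refine sum_congr rfl fun k _ => ?_
  simp [zsmul_eq_mul]

theorem boole_pow_zero (n m : ℕ) (hm : m < n) (a b : ℝ) :
    ∑ k ∈ Finset.range (n + 1), (-1 : ℝ)^(n - k) * (n.choose k) * (a + k * b)^m = 0 := by
  have hdeg : ((C b * X + C a) ^ m).natDegree < n :=
    (natDegree_pow_le_of_le m natDegree_linear_le).trans_lt (by rwa [mul_one])
  have h := sum_range_alternating_choose_mul_eval_eq_zero hdeg
  simp only [eval_pow, eval_add, eval_mul, eval_C, eval_X] at h
  rw [← h]
  exact sum_congr rfl fun k _ => by ring
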